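/- Let G be a totally disconnected locally compact group, α a continuous endomorphism of G, and U⁽¹⁾, U⁽²⁾ compact open subgroups of G, each tidy for α. If both sets {α^{-n}(U⁽¹⁾) : n ∈ ℕ} and {α^{-n}(U⁽²⁾) : n ∈ ℕ} are finite, then [U⁽¹⁾ : U⁽¹⁾ ∩ α⁻¹(U⁽¹⁾)] = 1 = [U⁽²⁾ : U⁽²⁾ ∩ α⁻¹(U⁽²⁾)], and the compact open subgroup U⁽¹⁾ ∩ U⁽²⁾ is tidy for α. -/

import Mathlib

open Pointwise Subgroup Filter

variable {G : Type*}

/-- The `n`-fold iterate of an endomorphism `α : G →* G`, as a monoid homomorphism. -/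
def iterHom [Group G] (α : G →* G) : ℕ → G →* G
  | 0 => MonoidHom.id G
  | n + 1 => α.comp (iterHom α n)

/-- The descending sequence `U_0 = U`, `U_{n+1} = U ⊓ α(U_n)`. -/
def seqU [Group G] (α : G →* G) (U : Subgroup G) : ℕ → Subgroup G
  | 0 => U
  | n + 1 => U ⊓ Subgroup.map α (seqU α U n)

/-- `U₊ = ⋂ₙ Uₙ`. -/
def Uplus [Group G] (α : G →* G) (U : Subgroup G) : Subgroup G := ⨅ n, seqU α U n

/-- `U₋ = ⋂ₙ α^{-n}(U)`. -/
def Uminus [Group G] (α : G →* G) (U : Subgroup G) : Subgroup G :=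
  ⨅ n, Subgroup.comap (iterHom α n) U

/-- `U₊₊ = ⋃ₙ αⁿ(U₊)` as a subset of `G`. -/
def Upp [Group G] (α : G →* G) (U : Subgroup G) : Set G :=
  ⋃ n, iterHom α n '' (Uplus α U : Set G)

/-- `U₋₋ = ⋃ₙ α^{-n}(U₋)` as a subset of `G`. -/
def Umm [Group G] (α : G →* G) (U : Subgroup G) : Set G :=
  ⋃ n, iterHom α n ⁻¹' (Uminus α U : Set G)

/-- `U₋ₙ = ⋂_{k=0}^{n} α^{-k}(U)`. -/
def Uneg [Group G] (α : G →* G) (U : Subgroup G) (n : ℕ) : Subgroup G :=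
  ⨅ k ∈ Finset.range (n + 1), Subgroup.comap (iterHom α k) U

/-- `U` is tidy above for `α` if `U = U₊U₋`. -/
def TidyAbove [Group G] (α : G →* G) (U : Subgroup G) : Prop :=
  (U : Set G) = (Uplus α U : Set G) * (Uminus α U : Set G)

/-- `U` is tidy below for `α` if `U₋₋` is closed. -/
def TidyBelow [Group G] [TopologicalSpace G] (α : G →* G) (U : Subgroup G) : Prop :=
  IsClosed (Umm α U)

/-- `U` is tidy for `α` if it is tidy above and tidy below for `α`. -/
def Tidy [Group G] [TopologicalSpace G] (α : G →* G) (U : Subgroup G) : Prop :=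
  TidyAbove α U ∧ TidyBelow α U

/-- The scale of `α`: the minimum of `[α(V) : α(V) ∩ V]` over compact open subgroups `V`. -/
noncomputable def scale [Group G] [TopologicalSpace G] (α : G →* G) : ℕ :=
  sInf {n : ℕ | ∃ V : Subgroup G, IsCompact (V : Set G) ∧ IsOpen (V : Set G) ∧
    n = Subgroup.relIndex V (Subgroup.map α V)}

set_option linter.unusedSectionVars false
set_option linter.unusedVariables false

section Aux

variable [Group G] (α : G →* G) (U : Subgroup G)

lemma iterHom_succ_apply' (n : ℕ) (x : G) : iterHom α (n + 1) x = iterHom α n (α x) := by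
  induction n with
  | zero => rfl
  | succ n ih =>
    show α (iterHom α (n + 1) x) = α (iterHom α n (α x))
    rw [ih]

lemma seqU_antitone : Antitone (seqU α U) := by
  apply antitone_nat_of_succ_le
  intro n
  induction n with
  | zero => exact inf_le_left
  | succ n ih => exact inf_le_inf_left U (Subgroup.map_mono ih)

lemma seqU_le : ∀ n, seqU α U n ≤ U
  | 0 => le_rfl
  | n + 1 => inf_le_left

lemma Uplus_le : Uplus α U ≤ U := iInf_le (seqU α U) 0

lemma mem_Uneg {n : ℕ} {x : G} : x ∈ Uneg α U n ↔ ∀ k ≤ n, iterHom α k x ∈ U := by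
  simp [Uneg, Subgroup.mem_iInf, Nat.lt_succ_iff]

lemma Uneg_antitone : Antitone (Uneg α U) := by
  intro m n hmn x hx
  rw [mem_Uneg] at hx ⊢
  exact fun k hk => hx k (hk.trans hmn)

lemma Uminus_le_Uneg (n : ℕ) : Uminus α U ≤ Uneg α U n := by
  intro x hx
  rw [mem_Uneg]
  exact fun k _ => Subgroup.mem_iInf.1 hx k

lemma Uneg_zero : Uneg α U 0 = U := by
  ext x
  rw [mem_Uneg]
  constructor
  · intro h; exact h 0 le_rfl
  · intro h k hk
    interval_cases k
    exact h

end Aux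

section Top

variable [Group G] [TopologicalSpace G] [IsTopologicalGroup G] (α : G →* G) (U : Subgroup G)

lemma t2_of_td [TotallyDisconnectedSpace G] : T2Space G := by
  rw [IsTopologicalGroup.t2Space_iff_one_closed, ← connectedComponent_eq_singleton (1 : G)]
  exact isClosed_connectedComponent

lemma iterHom_continuous (hα : Continuous α) : ∀ n, Continuous (iterHom α n)
  | 0 => continuous_id
  | n + 1 => hα.comp (iterHom_continuous hα n)

variable [TotallyDisconnectedSpace G]

lemma seqU_isCompact (hα : Continuous α) (hUc : IsCompact (U : Set G)) :
    ∀ n, IsCompact (seqU α U n : Set G) := by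
  haveI : T2Space G := t2_of_td
  intro n
  induction n with
  | zero => exact hUc
  | succ n ih =>
    have h1 : IsCompact (Subgroup.map α (seqU α U n) : Set G) := by
      rw [Subgroup.coe_map]
      exact ih.image hα
    show IsCompact ((U ⊓ Subgroup.map α (seqU α U n) : Subgroup G) : Set G)
    rw [Subgroup.coe_inf]
    exact hUc.inter_right h1.isClosed

lemma Uplus_surj (hα : Continuous α) (hUc : IsCompact (U : Set G)) {x : G}
    (hx : x ∈ Uplus α U) : ∃ c ∈ Uplus α U, α c = x := by
  haveI : T2Space G := t2_of_td
  have hxn : ∀ n, x ∈ seqU α U n := fun n => Subgroup.mem_iInf.1 hx n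
  set K : ℕ → Set G := fun n => (seqU α U n : Set G) ∩ α ⁻¹' {x} with hK
  have hsub : ∀ n, K (n + 1) ⊆ K n := fun n =>
    Set.inter_subset_inter_left _ (seqU_antitone α U (Nat.le_succ n))
  have hcl : ∀ n, IsClosed (K n) :=
    fun n => ((seqU_isCompact α U hα hUc n).isClosed).inter (IsClosed.preimage hα isClosed_singleton)
  have hne : ∀ n, (K n).Nonempty := by
    intro n
    have h1 : x ∈ U ⊓ Subgroup.map α (seqU α U n) := hxn (n + 1)
    obtain ⟨y, hy, hyx⟩ := Subgroup.mem_map.1 (Subgroup.mem_inf.1 h1).2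
    exact ⟨y, hy, by simp [hyx]⟩
  have hK0 : IsCompact (K 0) :=
    (seqU_isCompact α U hα hUc 0).inter_right (IsClosed.preimage hα isClosed_singleton)
  obtain ⟨y, hy⟩ :=
    IsCompact.nonempty_iInter_of_sequence_nonempty_isCompact_isClosed K hsub hne hK0 hcl
  simp only [Set.mem_iInter] at hy
  refine ⟨y, Subgroup.mem_iInf.2 fun n => (hy n).1, (hy 0).2⟩

lemma Uneg_step (hta : TidyAbove α U)
    (hsurj : ∀ x ∈ Uplus α U, ∃ c ∈ Uplus α U, α c = x) (n : ℕ)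
    (h : Uneg α U (n + 1) = Uneg α U (n + 2)) : Uneg α U n = Uneg α U (n + 1) := by
  refine le_antisymm ?_ (Uneg_antitone α U (Nat.le_succ n))
  intro x hx
  have hxU : (x : G) ∈ (U : Set G) := (mem_Uneg α U).1 hx 0 (Nat.zero_le n)
  rw [hta] at hxU
  obtain ⟨a, ha, b, hb, hab⟩ := Set.mem_mul.1 hxU
  have hbn : ∀ m, b ∈ Uneg α U m := fun m => Uminus_le_Uneg α U m hb
  have haUn : a ∈ Uneg α U n := by
    have hax : a = x * b⁻¹ := by rw [← hab]; group
    rw [hax]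
    exact mul_mem hx (inv_mem (hbn n))
  obtain ⟨c, hc, hac⟩ := hsurj a ha
  have hcU : c ∈ Uneg α U (n + 1) := by
    rw [mem_Uneg]
    intro k hk
    cases k with
    | zero => exact Uplus_le α U hc
    | succ k =>
      rw [iterHom_succ_apply', hac]
      exact (mem_Uneg α U).1 haUn k (Nat.succ_le_succ_iff.1 hk)
  rw [h] at hcU
  have haU1 : a ∈ Uneg α U (n + 1) := by
    rw [mem_Uneg]
    intro k hk
    rw [← hac, ← iterHom_succ_apply']
    exact (mem_Uneg α U).1 hcU (k + 1) (by omega)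
  rw [← hab]
  exact mul_mem haU1 (hbn (n + 1))

lemma tidy_above_le_comap (hα : Continuous α) (hUc : IsCompact (U : Set G))
    (hta : TidyAbove α U)
    (hfin : (Set.range fun n : ℕ => Subgroup.comap (iterHom α n) U).Finite) :
    U ≤ Subgroup.comap α U := by
  classical
  set f : ℕ → Subgroup G := fun n => Subgroup.comap (iterHom α n) U with hf
  obtain ⟨N, hN⟩ : ∃ N, ∀ k, ∃ j ≤ N, f j = f k := by
    choose g hg using fun y : (Set.range f) => y.2
    refine ⟨hfin.toFinset.attach.sup fun y => g ⟨y.1, hfin.mem_toFinset.1 y.2⟩, fun k => ?_⟩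
    have hk : f k ∈ hfin.toFinset := hfin.mem_toFinset.2 ⟨k, rfl⟩
    refine ⟨g ⟨f k, hfin.mem_toFinset.1 hk⟩,
      Finset.le_sup (f := fun y => g ⟨y.1, hfin.mem_toFinset.1 y.2⟩)
        (Finset.mem_attach _ (⟨f k, hk⟩ : {x // x ∈ hfin.toFinset})),
      hg ⟨f k, hfin.mem_toFinset.1 hk⟩⟩
  have hNle : ∀ k, Uneg α U N ≤ f k := by
    intro k
    obtain ⟨j, hj, hfj⟩ := hN k
    rw [← hfj]
    intro x hx
    exact (mem_Uneg α U).1 hx j hj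
  have hbase : Uneg α U N = Uneg α U (N + 1) := by
    refine le_antisymm ?_ (Uneg_antitone α U (Nat.le_succ N))
    intro x hx
    rw [mem_Uneg]
    exact fun k _ => hNle k hx
  have hsurj := fun x hx => Uplus_surj α U hα hUc (x := x) hx
  have hall : ∀ j, Uneg α U (N - j) = Uneg α U (N - j + 1) := by
    intro j
    induction j with
    | zero => simpa using hbase
    | succ j ih =>
      rcases Nat.lt_or_ge j N with hlt | hge
      · refine Uneg_step α U hta hsurj _ ?_
        rw [(by omega : N - (j + 1) + 1 = N - j), (by omega : N - (j + 1) + 2 = N - j + 1)]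
        exact ih
      · rw [(by omega : N - (j + 1) = N - j)]
        exact ih
  have h01 : Uneg α U 0 = Uneg α U 1 := by simpa using hall N
  intro x hx
  have hx0 : x ∈ Uneg α U 0 := (Uneg_zero α U).symm ▸ hx
  rw [h01] at hx0
  have := (mem_Uneg α U).1 hx0 1 le_rfl
  exact this

end Top

/-- If `U⁽¹⁾, U⁽²⁾` are both tidy for `α` and both sets of preimages are finite, then
`[U⁽ⁱ⁾ : U⁽ⁱ⁾ ∩ α⁻¹(U⁽ⁱ⁾)] = 1` for `i = 1, 2` and `U⁽¹⁾ ∩ U⁽²⁾` is tidy for `α`. -/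
theorem both_finite_tidy_inter [Group G] [TopologicalSpace G] [IsTopologicalGroup G]
    [TotallyDisconnectedSpace G] [LocallyCompactSpace G]
    (α : G →* G) (hα : Continuous α)
    (U₁ U₂ : Subgroup G)
    (hU₁c : IsCompact (U₁ : Set G)) (hU₁o : IsOpen (U₁ : Set G)) (hU₁ : Tidy α U₁)
    (hU₂c : IsCompact (U₂ : Set G)) (hU₂o : IsOpen (U₂ : Set G)) (hU₂ : Tidy α U₂)
    (hfin₁ : (Set.range fun n : ℕ => Subgroup.comap (iterHom α n) U₁).Finite)
    (hfin₂ : (Set.range fun n : ℕ => Subgroup.comap (iterHom α n) U₂).Finite) :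
    Subgroup.relIndex (Subgroup.comap α U₁) U₁ = 1 ∧
    Subgroup.relIndex (Subgroup.comap α U₂) U₂ = 1 ∧
    Tidy α (U₁ ⊓ U₂) := by
  have h1 : U₁ ≤ Subgroup.comap α U₁ := tidy_above_le_comap α U₁ hα hU₁c hU₁.1 hfin₁
  have h2 : U₂ ≤ Subgroup.comap α U₂ := tidy_above_le_comap α U₂ hα hU₂c hU₂.1 hfin₂
  set W : Subgroup G := U₁ ⊓ U₂ with hWdef
  have hW : W ≤ Subgroup.comap α W := by
    rw [hWdef, Subgroup.comap_inf]
    exact inf_le_inf h1 h2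
  have hWiter : ∀ n, W ≤ Subgroup.comap (iterHom α n) W := by
    intro n
    induction n with
    | zero => exact fun x hx => hx
    | succ n ih =>
      intro x hx
      exact hW (ih hx)
  have hUminusW : Uminus α W = W := by
    refine le_antisymm ?_ (le_iInf hWiter)
    refine (iInf_le _ 0).trans ?_
    rw [show iterHom α 0 = MonoidHom.id G from rfl, Subgroup.comap_id]
  refine ⟨Subgroup.relIndex_eq_one.2 h1, Subgroup.relIndex_eq_one.2 h2, ?_, ?_⟩
  · -- tidy above
    show (W : Set G) = (Uplus α W : Set G) * (Uminus α W : Set G)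
    rw [hUminusW]
    refine Set.Subset.antisymm ?_ ?_
    · intro x hx
      have := Set.mul_mem_mul (Uplus α W).one_mem hx
      rwa [one_mul] at this
    · rintro x hx
      obtain ⟨a, ha, b, hb, rfl⟩ := Set.mem_mul.1 hx
      exact mul_mem (Uplus_le α W ha) hb
  · -- tidy below
    show IsClosed (Umm α W)
    have hmono : Monotone fun n => Subgroup.comap (iterHom α n) W := by
      apply monotone_nat_of_le_succ
      intro n x hx
      exact hW hx
    have hdir : Directed (· ≤ ·) fun n => Subgroup.comap (iterHom α n) W :=
      hmono.directed_le
    have hcoe : Umm α W = ((⨆ n, Subgroup.comap (iterHom α n) W : Subgroup G) : Set G) := by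
      rw [Subgroup.coe_iSup_of_directed hdir]
      unfold Umm
      rw [hUminusW]
      exact Set.iUnion_congr fun n => (Subgroup.coe_comap _ _).symm
    rw [hcoe]
    apply Subgroup.isClosed_of_isOpen
    rw [Subgroup.coe_iSup_of_directed hdir]
    apply isOpen_iUnion
    intro n
    rw [Subgroup.coe_comap]
    exact (hU₁o.inter hU₂o).preimage (iterHom_continuous α hα n)
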